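/- Let Θ be a compact metric space, φ : Ω × Θ → ℝ continuous in θ, with sup_{θ∈Θ} |φ(·,θ)| ≤ ψ where e^{|α-1|ψ} ∈ L¹(Q) and e^{|α|ψ} ∈ L¹(P). Given iid Q-samples X_i and iid P-samples Y_i with empirical measures Q_n, P_n, the estimator R̂ = sup_{θ} {(1/(α-1)) log ∫ e^{(α-1)φ_θ} dQ_n - (1/α) log ∫ e^{αφ_θ} dP_n} converges in probability as n → ∞ to sup_{θ} {(1/(α-1)) log ∫ e^{(α-1)φ_θ} dQ - (1/α) log ∫ e^{αφ_θ} dP}. -/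

import Mathlib

/-!
The map `x ↦ (θ ↦ e^{c φ(x, θ)})` is dominated in the sup norm by `e^{|c| ψ}`, so the strong law
of large numbers in the separable Banach space `C(Θ, ℝ)` makes the empirical means converge almost
surely, uniformly in `θ`, to the population means. These are continuous and positive on the compact
`Θ`, so their range lies in a compact part of `(0, ∞)`, where `log` is uniformly continuous; hence
the empirical objective converges uniformly in `θ`, and its supremum converges almost surely.
Almost sure convergence implies convergence in probability.
-/

open MeasureTheory Filter Topology Set

theorem abs_ciSup_sub_ciSup_le {ι : Type*} [Nonempty ι] {f g : ι → ℝ}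
    (hg : BddAbove (range g)) {d : ℝ} (h : ∀ i, |f i - g i| ≤ d) :
    |(⨆ i, f i) - ⨆ i, g i| ≤ d := by
  have hfg : ∀ i, f i ≤ g i + d := fun i => by linarith [(abs_le.1 (h i)).2]
  have hgf : ∀ i, g i ≤ f i + d := fun i => by linarith [(abs_le.1 (h i)).1]
  obtain ⟨M, hM⟩ := hg
  have hf : BddAbove (range f) :=
    ⟨M + d, forall_mem_range.2 fun i => (hfg i).trans (by gcongr; exact hM ⟨i, rfl⟩)⟩
  rw [abs_sub_le_iff, sub_le_iff_le_add', sub_le_iff_le_add']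
  exact ⟨ciSup_le fun i => (hfg i).trans (add_le_add_left (le_ciSup ⟨M, hM⟩ i) d),
    ciSup_le fun i => (hgf i).trans (add_le_add_left (le_ciSup hf i) d)⟩

theorem TendstoUniformly.tendsto_ciSup {ι α : Type*} {p : Filter ι} {F : ι → α → ℝ}
    {f : α → ℝ} (hf : BddAbove (range f)) (h : TendstoUniformly F f p) :
    Tendsto (fun i => ⨆ x, F i x) p (𝓝 (⨆ x, f x)) := by
  rcases isEmpty_or_nonempty α with hα | hα
  · simp only [Real.iSup_of_isEmpty]
    exact tendsto_const_nhds
  refine Metric.tendsto_nhds.2 fun ε hε => ?_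
  filter_upwards [Metric.tendstoUniformly_iff.1 h (ε / 2) (half_pos hε)] with i hi
  refine (abs_ciSup_sub_ciSup_le hf fun x => ?_).trans_lt (half_lt_self hε)
  rw [← Real.dist_eq, dist_comm]
  exact (hi x).le

theorem ContinuousOn.comp_tendstoUniformly_of_isCompact {α β γ ι : Type*}
    [PseudoMetricSpace β] [ProperSpace β] [UniformSpace γ] {p : Filter ι} {F : ι → α → β}
    {f : α → β} {g : β → γ} {s : Set β} (hg : ContinuousOn g s) (hs : IsOpen s)
    (hf : IsCompact (range f)) (hfs : range f ⊆ s) (h : TendstoUniformly F f p) :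
    TendstoUniformly (fun i x => g (F i x)) (fun x => g (f x)) p := by
  obtain ⟨δ, hδ, hδs⟩ := hf.exists_cthickening_subset_open hs hfs
  refine UniformContinuousOn.comp_tendstoUniformly_eventually ?_
    (fun x => Metric.self_subset_cthickening _ (mem_range_self x))
    (hf.cthickening.uniformContinuousOn_of_continuous (hg.mono hδs)) h
  filter_upwards [Metric.tendstoUniformly_iff.1 h δ hδ] with i hi x
  exact Metric.mem_cthickening_of_dist_le _ _ _ _ (mem_range_self x)
    (by rw [dist_comm]; exact (hi x).le)

theorem ContinuousMap.lipschitzWith_one_iSup {Θ : Type*} [TopologicalSpace Θ] [CompactSpace Θ] :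
    LipschitzWith 1 fun f : C(Θ, ℝ) => ⨆ θ, f θ := by
  rcases isEmpty_or_nonempty Θ with hΘ | hΘ
  · simp only [Real.iSup_of_isEmpty]
    exact LipschitzWith.const' (α := C(Θ, ℝ)) (0 : ℝ)
  refine LipschitzWith.of_dist_le_mul fun f g => ?_
  rw [NNReal.coe_one, one_mul, Real.dist_eq]
  refine abs_ciSup_sub_ciSup_le (isCompact_range g.continuous).bddAbove fun θ => ?_
  rw [← Real.dist_eq]
  exact ContinuousMap.dist_apply_le_dist θ

theorem ContinuousMap.measurable_of_measurable_eval {Ω Θ : Type*} [MeasurableSpace Ω]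
    [MetricSpace Θ] [CompactSpace Θ] [MeasurableSpace C(Θ, ℝ)] [BorelSpace C(Θ, ℝ)]
    {u : Ω → C(Θ, ℝ)} (hu : ∀ θ, Measurable fun x => u x θ) : Measurable u := by
  rcases isEmpty_or_nonempty Θ with hΘ | hΘ
  · exact measurable_of_subsingleton_codomain u
  obtain ⟨t, ht⟩ := TopologicalSpace.exists_dense_seq Θ
  -- Evaluation along a dense sequence is a continuous injection of the Polish space `C(Θ, ℝ)`
  -- into `ℕ → ℝ`, hence a measurable embedding.
  have hE : MeasurableEmbedding fun f : C(Θ, ℝ) => fun k => f (t k) :=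
    (continuous_pi fun k => continuous_eval_const (t k)).measurableEmbedding
      fun f g hfg => ContinuousMap.ext fun θ => congrFun
        (Continuous.ext_on ht f.continuous g.continuous (by
          rintro _ ⟨k, rfl⟩; exact congrFun hfg k)) θ
  exact hE.measurable_comp_iff.1 (measurable_pi_lambda _ fun k => hu (t k))

theorem measurable_ciSup_of_continuous {N Θ : Type*} [MeasurableSpace N] [MetricSpace Θ]
    [CompactSpace Θ] {h : N → Θ → ℝ} (hmeas : ∀ θ, Measurable fun ω => h ω θ)
    (hcont : ∀ ω, Continuous (h ω)) : Measurable fun ω => ⨆ θ, h ω θ := by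
  borelize C(Θ, ℝ)
  exact ContinuousMap.lipschitzWith_one_iSup.continuous.measurable.comp
    (ContinuousMap.measurable_of_measurable_eval (u := fun ω => ⟨h ω, hcont ω⟩) hmeas)

noncomputable def empiricalMean {N Ω Θ : Type*} (X : ℕ → N → Ω) (g : Ω → Θ → ℝ) (n : ℕ) (ω : N)
    (θ : Θ) : ℝ :=
  (n : ℝ)⁻¹ * ∑ i ∈ Finset.range n, g (X i ω) θ

section EmpiricalMean

variable {N Ω Θ : Type*} {X : ℕ → N → Ω} {g : Ω → Θ → ℝ}

theorem measurable_empiricalMean [MeasurableSpace N] [MeasurableSpace Ω]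
    (hX : ∀ i, Measurable (X i)) (hg : ∀ θ, Measurable fun x => g x θ) (n : ℕ) (θ : Θ) :
    Measurable fun ω => empiricalMean X g n ω θ :=
  measurable_const.mul (Finset.measurable_sum _ fun i _ => (hg θ).comp (hX i))

theorem continuous_log_empiricalMean [TopologicalSpace Θ] (hg : ∀ x, Continuous (g x))
    (hg_pos : ∀ x θ, 0 < g x θ) (n : ℕ) (ω : N) :
    Continuous fun θ => Real.log (empiricalMean X g n ω θ) := by
  rcases Nat.eq_zero_or_pos n with rfl | hn
  · simp only [empiricalMean, Finset.range_zero, Finset.sum_empty, mul_zero]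
    exact continuous_const
  refine (continuous_const.mul (continuous_finsetSum _ fun i _ => hg (X i ω))).log
    fun θ => (mul_pos (by positivity) (Finset.sum_pos (fun i _ => hg_pos _ θ) ?_)).ne'
  exact Finset.nonempty_range_iff.2 hn.ne'

theorem ae_tendstoUniformly_empiricalMean [MeasurableSpace N] [MeasurableSpace Ω] [MetricSpace Θ]
    [CompactSpace Θ] {μ : Measure N} {Q : Measure Ω} (hg_meas : ∀ θ, Measurable fun x => g x θ)
    (hg_cont : ∀ x, Continuous (g x)) {G : Ω → ℝ} (hG : Integrable G Q)
    (hgG : ∀ x θ, |g x θ| ≤ G x) (hX : ∀ i, Measurable (X i))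
    (hiid : ProbabilityTheory.iIndepFun X μ) (hlaw : ∀ i, Measure.map (X i) μ = Q) :
    ∀ᵐ ω ∂μ, TendstoUniformly (fun n => empiricalMean X g n ω) (fun θ => ∫ x, g x θ ∂Q) atTop := by
  borelize C(Θ, ℝ)
  let Φ : Ω → C(Θ, ℝ) := fun x => ⟨g x, hg_cont x⟩
  have hΦ : Measurable Φ := ContinuousMap.measurable_of_measurable_eval hg_meas
  have hΦQ : Integrable Φ Q := hG.mono hΦ.aestronglyMeasurable <| .of_forall fun x =>
    (ContinuousMap.norm_le _ (norm_nonneg _)).2 fun θ => (hgG x θ).trans (le_abs_self _)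
  have hident : ∀ i, ProbabilityTheory.IdentDistrib (X i) (X 0) μ μ := fun i =>
    ⟨(hX i).aemeasurable, (hX 0).aemeasurable, by rw [hlaw i, hlaw 0]⟩
  have hint : Integrable (fun ω => Φ (X 0 ω)) μ :=
    (integrable_map_measure hΦ.aestronglyMeasurable (hX 0).aemeasurable).1 (by rwa [hlaw 0])
  have hmean : ∫ ω, Φ (X 0 ω) ∂μ = ∫ x, Φ x ∂Q := by
    rw [← hlaw 0, integral_map (hX 0).aemeasurable hΦ.aestronglyMeasurable]
  filter_upwards [ProbabilityTheory.strong_law_ae (fun i ω => Φ (X i ω)) hint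
    (fun i j hij => (hiid.indepFun hij).comp hΦ hΦ) fun i => (hident i).comp hΦ] with ω hω
  rw [hmean, ContinuousMap.tendsto_iff_tendstoUniformly] at hω
  convert hω using 1
  · ext n θ
    simp [empiricalMean, Φ]
  · ext θ
    exact (ContinuousMap.integral_apply hΦQ θ).symm

end EmpiricalMean

theorem abs_exp_mul_le_exp_abs_mul {c t s : ℝ} (h : |t| ≤ s) :
    |Real.exp (c * t)| ≤ Real.exp (|c| * s) := by
  rw [Real.abs_exp, Real.exp_le_exp]
  calc c * t ≤ |c| * |t| := (le_abs_self _).trans (abs_mul c t).le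
    _ ≤ |c| * s := mul_le_mul_of_nonneg_left h (abs_nonneg c)

section ExponentialMoments

variable {Ω Θ : Type*} [MeasurableSpace Ω] {Q : Measure Ω} {φ : Ω → Θ → ℝ} {ψ : Ω → ℝ} {c : ℝ}

theorem measurable_exp_mul (hφmeas : ∀ θ, Measurable fun x => φ x θ) (θ : Θ) :
    Measurable fun x => Real.exp (c * φ x θ) :=
  ((hφmeas θ).const_mul c).exp

theorem integrable_exp_mul (hφmeas : ∀ θ, Measurable fun x => φ x θ)
    (hψbound : ∀ x θ, |φ x θ| ≤ ψ x) (hψQ : Integrable (fun x => Real.exp (|c| * ψ x)) Q)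
    (θ : Θ) : Integrable (fun x => Real.exp (c * φ x θ)) Q :=
  hψQ.mono' (measurable_exp_mul hφmeas θ).aestronglyMeasurable
    (.of_forall fun x => abs_exp_mul_le_exp_abs_mul (hψbound x θ))

theorem continuous_integral_exp_mul [TopologicalSpace Θ] [FirstCountableTopology Θ]
    (hφmeas : ∀ θ, Measurable fun x => φ x θ) (hφcont : ∀ x, Continuous fun θ => φ x θ)
    (hψbound : ∀ x θ, |φ x θ| ≤ ψ x) (hψQ : Integrable (fun x => Real.exp (|c| * ψ x)) Q) :
    Continuous fun θ => ∫ x, Real.exp (c * φ x θ) ∂Q :=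
  continuous_of_dominated (fun θ => (integrable_exp_mul hφmeas hψbound hψQ θ).1)
    (fun θ => .of_forall fun x => abs_exp_mul_le_exp_abs_mul (hψbound x θ)) hψQ
    (.of_forall fun x => by fun_prop)

theorem ae_tendstoUniformly_empiricalMean_exp_mul {N : Type*} [MeasurableSpace N] [MetricSpace Θ]
    [CompactSpace Θ] {μ : Measure N} (hφmeas : ∀ θ, Measurable fun x => φ x θ)
    (hφcont : ∀ x, Continuous fun θ => φ x θ) (hψbound : ∀ x θ, |φ x θ| ≤ ψ x)
    (hψQ : Integrable (fun x => Real.exp (|c| * ψ x)) Q) {X : ℕ → N → Ω}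
    (hX : ∀ i, Measurable (X i)) (hiid : ProbabilityTheory.iIndepFun X μ)
    (hlaw : ∀ i, Measure.map (X i) μ = Q) :
    ∀ᵐ ω ∂μ, TendstoUniformly (fun n => empiricalMean X (fun x θ => Real.exp (c * φ x θ)) n ω)
      (fun θ => ∫ x, Real.exp (c * φ x θ) ∂Q) atTop :=
  ae_tendstoUniformly_empiricalMean (measurable_exp_mul hφmeas) (fun x => by fun_prop) hψQ
    (fun x θ => abs_exp_mul_le_exp_abs_mul (hψbound x θ)) hX hiid hlaw

end ExponentialMoments

noncomputable def renyiObjective (α : ℝ) (p : ℝ × ℝ) : ℝ :=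
  (α - 1)⁻¹ * Real.log p.1 - α⁻¹ * Real.log p.2

theorem continuousOn_renyiObjective (α : ℝ) :
    ContinuousOn (renyiObjective α) (Ioi 0 ×ˢ Ioi 0) := fun p hp =>
  have := hp.1.out.ne'
  have := hp.2.out.ne'
  ContinuousAt.continuousWithinAt (by unfold renyiObjective; fun_prop (disch := assumption))

theorem TendstoUniformly.tendsto_iSup_renyiObjective {ι Θ : Type*} [TopologicalSpace Θ]
    [CompactSpace Θ] {p : Filter ι} {f g : ι → Θ → ℝ} {F G : Θ → ℝ}
    (hf : TendstoUniformly f F p) (hg : TendstoUniformly g G p) (hF : Continuous F)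
    (hG : Continuous G) (hF_pos : ∀ θ, 0 < F θ) (hG_pos : ∀ θ, 0 < G θ) (α : ℝ) :
    Tendsto (fun i => ⨆ θ, renyiObjective α (f i θ, g i θ)) p
      (𝓝 (⨆ θ, renyiObjective α (F θ, G θ))) := by
  have hFG_pos : ∀ θ, (F θ, G θ) ∈ Ioi 0 ×ˢ Ioi 0 := fun θ => ⟨hF_pos θ, hG_pos θ⟩
  refine TendstoUniformly.tendsto_ciSup ?_ ?_
  · exact (isCompact_range ((continuousOn_renyiObjective α).comp_continuous (hF.prodMk hG)
      hFG_pos)).bddAbove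
  · exact (continuousOn_renyiObjective α).comp_tendstoUniformly_of_isCompact
      (isOpen_Ioi.prod isOpen_Ioi) (isCompact_range (hF.prodMk hG)) (range_subset_iff.2 hFG_pos)
      fun u hu => (hf.prodMk hg u hu).diag_of_prod

theorem measurable_iSup_renyiObjective_empiricalMean {N Ω Θ : Type*} [MeasurableSpace N]
    [MeasurableSpace Ω] [MetricSpace Θ] [CompactSpace Θ] (α : ℝ) {X Y : ℕ → N → Ω}
    (hX : ∀ i, Measurable (X i)) (hY : ∀ i, Measurable (Y i)) {g h : Ω → Θ → ℝ}
    (hg_meas : ∀ θ, Measurable fun x => g x θ) (hh_meas : ∀ θ, Measurable fun x => h x θ)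
    (hg_cont : ∀ x, Continuous (g x)) (hh_cont : ∀ x, Continuous (h x))
    (hg_pos : ∀ x θ, 0 < g x θ) (hh_pos : ∀ x θ, 0 < h x θ) (n : ℕ) :
    Measurable fun ω => ⨆ θ, renyiObjective α (empiricalMean X g n ω θ, empiricalMean Y h n ω θ) :=
  measurable_ciSup_of_continuous
    (fun θ => ((measurable_empiricalMean hX hg_meas n θ).log.const_mul _).sub
      ((measurable_empiricalMean hY hh_meas n θ).log.const_mul _))
    fun ω => (continuous_const.mul (continuous_log_empiricalMean hg_cont hg_pos n ω)).sub
      (continuous_const.mul (continuous_log_empiricalMean hh_cont hh_pos n ω))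

theorem renyi_estimator_consistency_fixed_k_general
    {Ω N Θ : Type*} [MeasurableSpace Ω] [MetricSpace Θ] [CompactSpace Θ]
    [MeasurableSpace N] (ℙ : Measure N) [IsProbabilityMeasure ℙ]
    (Q P : Measure Ω) [IsProbabilityMeasure Q] [IsProbabilityMeasure P]
    {α : ℝ}
    (φ : Ω → Θ → ℝ) (hφmeas : ∀ θ, Measurable fun x => φ x θ)
    (hφcont : ∀ x, Continuous fun θ => φ x θ)
    (ψ : Ω → ℝ) (hψbound : ∀ x θ, |φ x θ| ≤ ψ x)
    (hψQ : Integrable (fun x => Real.exp (|α - 1| * ψ x)) Q)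
    (hψP : Integrable (fun x => Real.exp (|α| * ψ x)) P)
    (X Y : ℕ → N → Ω) (hX : ∀ i, Measurable (X i)) (hY : ∀ i, Measurable (Y i))
    (hXiid : ProbabilityTheory.iIndepFun X ℙ)
    (hYiid : ProbabilityTheory.iIndepFun Y ℙ)
    (hXlaw : ∀ i, Measure.map (X i) ℙ = Q) (hYlaw : ∀ i, Measure.map (Y i) ℙ = P) :
    ∀ ε : ℝ, 0 < ε →
      Tendsto (fun n : ℕ => ℙ {ω : N |
          ε ≤ |(⨆ θ : Θ,
              ((α - 1)⁻¹ * Real.log ((n : ℝ)⁻¹ *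
                  ∑ i ∈ Finset.range n, Real.exp ((α - 1) * φ (X i ω) θ))
                - α⁻¹ * Real.log ((n : ℝ)⁻¹ *
                    ∑ i ∈ Finset.range n, Real.exp (α * φ (Y i ω) θ))))
            - (⨆ θ : Θ,
              ((α - 1)⁻¹ * Real.log (∫ x, Real.exp ((α - 1) * φ x θ) ∂Q)
                - α⁻¹ * Real.log (∫ x, Real.exp (α * φ x θ) ∂P)))| })
        atTop (𝓝 0) := by
  intro ε hε
  let gQ : Ω → Θ → ℝ := fun x θ => Real.exp ((α - 1) * φ x θ)
  let gP : Ω → Θ → ℝ := fun x θ => Real.exp (α * φ x θ)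
  have hae : ∀ᵐ ω ∂ℙ, Tendsto
      (fun n => ⨆ θ, renyiObjective α (empiricalMean X gQ n ω θ, empiricalMean Y gP n ω θ))
      atTop (𝓝 (⨆ θ, renyiObjective α (∫ x, gQ x θ ∂Q, ∫ x, gP x θ ∂P))) := by
    filter_upwards [ae_tendstoUniformly_empiricalMean_exp_mul hφmeas hφcont hψbound hψQ hX hXiid
      hXlaw, ae_tendstoUniformly_empiricalMean_exp_mul hφmeas hφcont hψbound hψP hY hYiid hYlaw]
      with ω hQω hPω
    exact hQω.tendsto_iSup_renyiObjective hPω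
      (continuous_integral_exp_mul hφmeas hφcont hψbound hψQ)
      (continuous_integral_exp_mul hφmeas hφcont hψbound hψP)
      (fun θ => integral_exp_pos (integrable_exp_mul hφmeas hψbound hψQ θ))
      (fun θ => integral_exp_pos (integrable_exp_mul hφmeas hψbound hψP θ)) α
  have hmeas : ∀ n, AEStronglyMeasurable (fun ω =>
      ⨆ θ, renyiObjective α (empiricalMean X gQ n ω θ, empiricalMean Y gP n ω θ)) ℙ := fun n =>
    (measurable_iSup_renyiObjective_empiricalMean α hX hY (measurable_exp_mul hφmeas)
      (measurable_exp_mul hφmeas) (fun x => by fun_prop) (fun x => by fun_prop)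
      (fun _ _ => Real.exp_pos _) (fun _ _ => Real.exp_pos _) n).aestronglyMeasurable
  exact tendstoInMeasure_iff_dist.1 (tendstoInMeasure_of_tendsto_ae hmeas hae) ε hε

/-- For a compact parameter space `Θ`, `φ(·,θ)` measurable and continuous in
`θ`, uniformly bounded by `ψ` with `e^{|α-1|ψ} ∈ L¹(Q)` and `e^{|α|ψ} ∈ L¹(P)`, the
empirical Rényi–Donsker–Varadhan estimator built from iid `Q`-samples `X_i` and iid
`P`-samples `Y_i` converges in probability to the population value
`sup_θ {(1/(α-1)) log ∫ e^{(α-1)φ_θ} dQ - (1/α) log ∫ e^{αφ_θ} dP}`. -/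
theorem renyi_estimator_consistency_fixed_k
    {Ω N Θ : Type*} [MeasurableSpace Ω] [MetricSpace Θ] [CompactSpace Θ]
    [MeasurableSpace N] (ℙ : Measure N) [IsProbabilityMeasure ℙ]
    (Q P : Measure Ω) [IsProbabilityMeasure Q] [IsProbabilityMeasure P]
    {α : ℝ} (hα0 : α ≠ 0) (hα1 : α ≠ 1)
    (φ : Ω → Θ → ℝ) (hφmeas : ∀ θ, Measurable fun x => φ x θ)
    (hφcont : ∀ x, Continuous fun θ => φ x θ)
    (ψ : Ω → ℝ) (hψ : Measurable ψ) (hψbound : ∀ x θ, |φ x θ| ≤ ψ x)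
    (hψQ : Integrable (fun x => Real.exp (|α - 1| * ψ x)) Q)
    (hψP : Integrable (fun x => Real.exp (|α| * ψ x)) P)
    (X Y : ℕ → N → Ω) (hX : ∀ i, Measurable (X i)) (hY : ∀ i, Measurable (Y i))
    (hXiid : ProbabilityTheory.iIndepFun X ℙ)
    (hYiid : ProbabilityTheory.iIndepFun Y ℙ)
    (hXlaw : ∀ i, Measure.map (X i) ℙ = Q) (hYlaw : ∀ i, Measure.map (Y i) ℙ = P) :
    ∀ ε : ℝ, 0 < ε →
      Tendsto (fun n : ℕ => ℙ {ω : N |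
          ε ≤ |(⨆ θ : Θ,
              ((α - 1)⁻¹ * Real.log ((n : ℝ)⁻¹ *
                  ∑ i ∈ Finset.range n, Real.exp ((α - 1) * φ (X i ω) θ))
                - α⁻¹ * Real.log ((n : ℝ)⁻¹ *
                    ∑ i ∈ Finset.range n, Real.exp (α * φ (Y i ω) θ))))
            - (⨆ θ : Θ,
              ((α - 1)⁻¹ * Real.log (∫ x, Real.exp ((α - 1) * φ x θ) ∂Q)
                - α⁻¹ * Real.log (∫ x, Real.exp (α * φ x θ) ∂P)))| })
        atTop (𝓝 0) :=
  renyi_estimator_consistency_fixed_k_general ℙ Q P φ hφmeas hφcont ψ hψbound hψQ hψP X Y hX hY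
    hXiid hYiid hXlaw hYlaw
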